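/- Let k ≥ 2 be a natural number and define g_k(x) = x^(16k)·(x-2k+1)^(16k)·∏_{i ∈ {0,...,2k-1} \ {k-1,k}} (x - i). Then for all real x ∈ [0, k-1] ∪ [k, 2k-1], |g_k(x)/g_k(k-1)| ≤ 1. -/

import Mathlib

/-!
Pairing the roots `i` and `2k-1-i` writes `gPoly k x` as `(x (x-2k+1)) ^ (16k)` times the
quadratics `(x-i)(x-2k+1+i)`, `i < k-1`; hence `gPoly k` is symmetric about `(2k-1)/2` and only
`[0, k-1]` matters. On `[k-2, k-1]` each quadratic factor has constant sign and growing modulus, so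
`|gPoly k|` increases there. For `0 ≤ x ≤ k-2`, passing from `x` to `x+1` shifts the roots of the
product by one, so all but two linear factors cancel and `|gPoly k x| ≤ |gPoly k (x+1)|` becomes an
explicit inequality won by the high power of `x (2k-1-x)`. Unit steps carry any point of `[0, k-1]`
into `[k-2, k-1]`.
-/

noncomputable def gPoly (k : ℕ) (x : ℝ) : ℝ :=
  x ^ (16 * k) * (x - 2 * (k : ℝ) + 1) ^ (16 * k) *
    ∏ i ∈ Finset.range (2 * k) \ {k - 1, k}, (x - (i : ℝ))

open Finset

theorem Finset.prod_range_two_mul_sdiff_eq_prod_mul_reflect {M : Type*} [CommMonoid M]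
    (k : ℕ) (f : ℕ → M) :
    ∏ i ∈ range (2 * k) \ {k - 1, k}, f i = ∏ i ∈ range (k - 1), f i * f (2 * k - 1 - i) := by
  have hsplit : range (2 * k) \ {k - 1, k} =
      range (k - 1) ∪ (range (k - 1)).image (fun i => 2 * k - 1 - i) := by
    ext j
    simp only [mem_sdiff, mem_range, mem_insert, mem_singleton, mem_union, mem_image]
    constructor
    · intro hj
      by_cases hlt : j < k - 1
      · exact Or.inl hlt
      · exact Or.inr ⟨2 * k - 1 - j, by omega, by omega⟩
    · rintro (hj | ⟨i, hi, rfl⟩) <;> omega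
  rw [hsplit, prod_union, prod_image, prod_mul_distrib]
  · intro a ha b hb hab
    simp only [coe_range, Set.mem_Iio] at ha hb
    simp only at hab
    omega
  · rw [disjoint_left]
    simp only [mem_range, mem_image]
    rintro a ha ⟨i, hi, rfl⟩
    omega

theorem Finset.prod_range_sub_mul_add_one {R : Type*} [CommRing R] (m : ℕ) (x : R) :
    (∏ i ∈ range m, (x - i)) * (x + 1) = (∏ i ∈ range m, (x + 1 - i)) * (x + 1 - m) := by
  rw [← prod_range_succ (fun i : ℕ => x + 1 - i), prod_range_succ']
  simp [add_sub_add_right_eq_sub]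

theorem Finset.prod_range_add_mul_sub {R : Type*} [CommRing R] (m : ℕ) (x s : R) :
    (∏ i ∈ range m, (x + 1 - s + i)) * (x - s) = (∏ i ∈ range m, (x - s + i)) * (x - s + m) := by
  rw [← prod_range_succ (fun i : ℕ => x - s + i), prod_range_succ']
  push_cast
  simp only [add_zero]
  congr 1
  exact prod_congr rfl fun i _ => by ring

lemma abs_mul_sub_le_abs_mul_sub {c s x y : ℝ} (hcx : c ≤ x) (hxy : x ≤ y) (hs : x + y ≤ s) :
    |(x - c) * (x - s + c)| ≤ |(y - c) * (y - s + c)| := by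
  rw [abs_of_nonpos (mul_nonpos_of_nonneg_of_nonpos (by linarith) (by linarith)),
    abs_of_nonpos (mul_nonpos_of_nonneg_of_nonpos (by linarith) (by linarith))]
  nlinarith [mul_nonneg (sub_nonneg.2 hxy) (sub_nonneg.2 hs)]

lemma mul_mul_le_add_mul_mul {k x N : ℝ} (hN : 2 * k ≤ N) (hx0 : 0 ≤ x)
    (hx : x ≤ k - 2) :
    x * (2 * k - 1 - x) * ((k - 2 - x) * (2 * k - 1 - x)) ≤
      (x * (2 * k - 1 - x) + N * (2 * (k - 1 - x))) * ((x + 1) * (k - x)) := by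
  have hβ : 0 ≤ (x + 1) * (k - x) := mul_nonneg (by linarith) (by linarith)
  have hQd : x * (2 * k - 1 - x) * (k - 1 - x) ≤ 2 * k * ((x + 1) * (k - x)) := by
    have h1 : x * (2 * k - 1 - x) ≤ (x + 1) * (2 * k) := by nlinarith
    nlinarith [mul_le_mul h1 (by linarith : k - 1 - x ≤ k - x) (by linarith) (by nlinarith)]
  calc x * (2 * k - 1 - x) * ((k - 2 - x) * (2 * k - 1 - x))
      = x * (2 * k - 1 - x) * ((x + 1) * (k - x)) +
          2 * (x * (2 * k - 1 - x)) * ((k - 1 - x) ^ 2 - k) := by ring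
    _ ≤ x * (2 * k - 1 - x) * ((x + 1) * (k - x)) +
          2 * (k - 1 - x) * (x * (2 * k - 1 - x) * (k - 1 - x)) := by
        nlinarith [mul_nonneg (mul_nonneg hx0 (by linarith : 0 ≤ 2 * k - 1 - x))
          (by linarith : (0 : ℝ) ≤ k)]
    _ ≤ x * (2 * k - 1 - x) * ((x + 1) * (k - x)) +
          2 * (k - 1 - x) * (2 * k * ((x + 1) * (k - x))) := by gcongr; linarith
    _ ≤ (x * (2 * k - 1 - x) + N * (2 * (k - 1 - x))) * ((x + 1) * (k - x)) := by
        nlinarith [mul_le_mul_of_nonneg_right hN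
          (mul_nonneg (by linarith : (0 : ℝ) ≤ 2 * (k - 1 - x)) hβ)]

/-- With `Q = x (2k-1-x)` and `P = (x+1)(2k-2-x) = Q + 2(k-1-x)`, Bernoulli's inequality gives
`P ^ N ≥ Q ^ N (1 + N (P - Q) / Q)`, and `N ≥ 2k` makes this gain beat the loss in the quadratic
factors. -/
lemma mul_sub_pow_mul_le_of_two_mul_le {k x : ℝ} {N : ℕ} (hN : 2 * k ≤ N) (hx0 : 0 ≤ x)
    (hx : x ≤ k - 2) :
    (x * (2 * k - 1 - x)) ^ N * ((k - 2 - x) * (2 * k - 1 - x)) ≤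
      ((x + 1) * (2 * k - 2 - x)) ^ N * ((x + 1) * (k - x)) := by
  have hβ : 0 ≤ (x + 1) * (k - x) := mul_nonneg (by linarith) (by linarith)
  rcases hx0.eq_or_lt with rfl | hx0
  · have hN0 : N ≠ 0 := by rintro rfl; norm_num at hN; linarith
    simp only [zero_mul, zero_pow hN0]
    exact mul_nonneg (pow_nonneg (by nlinarith) _) hβ
  have hpoly := mul_mul_le_add_mul_mul hN hx0.le hx
  set Q := x * (2 * k - 1 - x) with hQ
  have hQpos : 0 < Q := mul_pos hx0 (by linarith)
  set r := 2 * (k - 1 - x) / Q with hr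
  have hr0 : 0 ≤ r := div_nonneg (by linarith) hQpos.le
  have hP : (x + 1) * (2 * k - 2 - x) = Q * (1 + r) := by
    rw [hr, mul_add, mul_div_cancel₀ _ hQpos.ne', hQ]
    ring
  have hα : (k - 2 - x) * (2 * k - 1 - x) ≤ (1 + N * r) * ((x + 1) * (k - x)) := by
    refine le_of_mul_le_mul_left (hpoly.trans_eq ?_) hQpos
    rw [hr]
    field_simp
  calc Q ^ N * ((k - 2 - x) * (2 * k - 1 - x))
      ≤ Q ^ N * ((1 + N * r) * ((x + 1) * (k - x))) := by gcongr
    _ ≤ Q ^ N * ((1 + r) ^ N * ((x + 1) * (k - x))) := by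
        gcongr
        exact one_add_mul_le_pow (by linarith) N
    _ = (Q * (1 + r)) ^ N * ((x + 1) * (k - x)) := by rw [← mul_assoc, ← mul_pow]
    _ = ((x + 1) * (2 * k - 2 - x)) ^ N * ((x + 1) * (k - x)) := by rw [hP]

lemma le_add_nat_of_le_add_one {f : ℝ → ℝ} {a b : ℝ}
    (hf : ∀ x, a ≤ x → x + 1 ≤ b → f x ≤ f (x + 1)) {x : ℝ} (hx : a ≤ x) (n : ℕ)
    (hn : x + n ≤ b) : f x ≤ f (x + n) := by
  induction n with
  | zero => simp
  | succ n ih =>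
    push_cast at hn ⊢
    rw [← add_assoc]
    exact (ih (by linarith)).trans (hf _ (by linarith [n.cast_nonneg (α := ℝ)]) (by linarith))

lemma gPoly_eq_prod_pairs (k : ℕ) (x : ℝ) :
    gPoly k x = (x * (x - (2 * k - 1))) ^ (16 * k) *
      ∏ i ∈ range (k - 1), ((x - i) * (x - (2 * k - 1) + i)) := by
  rw [gPoly, prod_range_two_mul_sdiff_eq_prod_mul_reflect, mul_pow,
    show x - 2 * (k : ℝ) + 1 = x - (2 * k - 1) by ring]
  congr 1
  refine prod_congr rfl fun i hi => ?_
  rw [mem_range] at hi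
  rw [Nat.cast_sub (by omega), Nat.cast_sub (by omega)]
  push_cast
  ring

lemma gPoly_reflect (k : ℕ) (x : ℝ) : gPoly k (2 * k - 1 - x) = gPoly k x := by
  rw [gPoly_eq_prod_pairs, gPoly_eq_prod_pairs]
  congr 1
  · ring
  · exact prod_congr rfl fun i _ => by ring

lemma gPoly_ne_zero {k : ℕ} (hk : 2 ≤ k) : gPoly k (k - 1) ≠ 0 := by
  have hk' : (2 : ℝ) ≤ k := by exact_mod_cast hk
  rw [gPoly_eq_prod_pairs]
  refine mul_ne_zero (pow_ne_zero _ (mul_ne_zero (by linarith) (by linarith)))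
    (prod_ne_zero_iff.2 fun i hi => mul_ne_zero ?_ ?_)
  all_goals
    have hi : (i : ℝ) + 2 ≤ k := by exact_mod_cast (by simp at hi; omega : i + 2 ≤ k)
    linarith

lemma abs_gPoly_monotoneOn {k : ℕ} (hk : 2 ≤ k) :
    MonotoneOn (fun x => |gPoly k x|) (Set.Icc ((k : ℝ) - 2) (k - 1)) := by
  rintro x ⟨hx, -⟩ y ⟨-, hy⟩ hxy
  have hk' : (2 : ℝ) ≤ k := by exact_mod_cast hk
  have hs : x + y ≤ 2 * k - 1 := by linarith
  dsimp only
  rw [gPoly_eq_prod_pairs, gPoly_eq_prod_pairs, abs_mul, abs_mul, abs_pow, abs_pow, abs_prod,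
    abs_prod]
  refine mul_le_mul (pow_le_pow_left₀ (abs_nonneg _) ?_ _)
    (prod_le_prod (fun _ _ => abs_nonneg _) fun i hi => ?_) (by positivity) (by positivity)
  · simpa using abs_mul_sub_le_abs_mul_sub (c := 0) (by linarith) hxy hs
  · have hi : (i : ℝ) + 2 ≤ k := by exact_mod_cast (by simp at hi; omega : i + 2 ≤ k)
    exact abs_mul_sub_le_abs_mul_sub (by linarith) hxy hs

lemma abs_gPoly_le_abs_gPoly_add_one {k : ℕ} (hk : 2 ≤ k) {x : ℝ} (hx0 : 0 ≤ x)
    (hx : x ≤ k - 2) : |gPoly k x| ≤ |gPoly k (x + 1)| := by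
  have hk' : (2 : ℝ) ≤ k := by exact_mod_cast hk
  set A : ℝ → ℝ := fun y => ∏ i ∈ range (k - 1), (y - i) with hA
  set B : ℝ → ℝ := fun y => ∏ i ∈ range (k - 1), (y - (2 * k - 1) + i) with hB
  have hg : ∀ y, |gPoly k y| = |y * (y - (2 * k - 1))| ^ (16 * k) * |A y * B y| := fun y => by
    rw [gPoly_eq_prod_pairs, prod_mul_distrib, abs_mul, abs_pow]
  have hQ : ∀ y : ℝ, 0 ≤ y → y ≤ 2 * k - 1 → |y * (y - (2 * k - 1))| = y * (2 * k - 1 - y) :=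
    fun y h0 h1 => by rw [abs_mul, abs_of_nonneg h0, abs_of_nonpos (by linarith), neg_sub]
  have hm : ((k - 1 : ℕ) : ℝ) = k - 1 := by rw [Nat.cast_sub (by omega)]; simp
  have hAB : |A x * B x| * ((x + 1) * (k - x)) =
      |A (x + 1) * B (x + 1)| * ((k - 2 - x) * (2 * k - 1 - x)) := by
    have hA1 := prod_range_sub_mul_add_one (k - 1) x
    have hB1 := prod_range_add_mul_sub (k - 1) x (2 * k - 1)
    rw [hm] at hA1 hB1
    rw [← abs_of_nonneg (by nlinarith : 0 ≤ (x + 1) * (k - x)),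
      ← abs_of_nonneg (by nlinarith : 0 ≤ (k - 2 - x) * (2 * k - 1 - x)), ← abs_mul, ← abs_mul,
      ← abs_neg]
    congr 1
    simp only [hA, hB]
    linear_combination (∏ i ∈ range (k - 1), (x - (2 * k - 1) + i)) * (x - k) * hA1 -
      (∏ i ∈ range (k - 1), (x + 1 - i)) * (x + 2 - k) * hB1
  have hkey := mul_sub_pow_mul_le_of_two_mul_le (N := 16 * k) (by push_cast; linarith) hx0 hx
  rw [hg, hg, hQ x hx0 (by linarith), hQ (x + 1) (by linarith) (by linarith),
    show (2 * k - 1 - (x + 1) : ℝ) = 2 * k - 2 - x by ring]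
  refine le_of_mul_le_mul_right ?_ (by nlinarith : 0 < (x + 1) * (k - x))
  calc (x * (2 * k - 1 - x)) ^ (16 * k) * |A x * B x| * ((x + 1) * (k - x))
      = (x * (2 * k - 1 - x)) ^ (16 * k) * ((k - 2 - x) * (2 * k - 1 - x)) *
          |A (x + 1) * B (x + 1)| := by rw [mul_assoc, hAB]; ring
    _ ≤ ((x + 1) * (2 * k - 2 - x)) ^ (16 * k) * ((x + 1) * (k - x)) *
          |A (x + 1) * B (x + 1)| := mul_le_mul_of_nonneg_right hkey (abs_nonneg _)
    _ = ((x + 1) * (2 * k - 2 - x)) ^ (16 * k) * |A (x + 1) * B (x + 1)| *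
          ((x + 1) * (k - x)) := by ring

lemma abs_gPoly_le_of_mem_Icc {k : ℕ} (hk : 2 ≤ k) {x : ℝ} (hx : x ∈ Set.Icc 0 ((k : ℝ) - 1)) :
    |gPoly k x| ≤ |gPoly k (k - 1)| := by
  obtain ⟨hx0, hx1⟩ := hx
  have hn : (⌊k - 1 - x⌋₊ : ℝ) ≤ k - 1 - x := Nat.floor_le (by linarith)
  have hn' : k - 1 - x < ⌊k - 1 - x⌋₊ + 1 := Nat.lt_floor_add_one _
  calc |gPoly k x| ≤ |gPoly k (x + ⌊k - 1 - x⌋₊)| :=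
        le_add_nat_of_le_add_one (f := fun y => |gPoly k y|) (b := k - 1)
          (fun y hy0 hy => abs_gPoly_le_abs_gPoly_add_one hk hy0 (by linarith)) hx0 _
          (by linarith)
    _ ≤ |gPoly k (k - 1)| :=
        abs_gPoly_monotoneOn hk ⟨by linarith, by linarith⟩ ⟨by linarith, le_rfl⟩ (by linarith)

theorem stmt_7 (k : ℕ) (hk : 2 ≤ k) (x : ℝ)
    (hx : x ∈ Set.Icc (0 : ℝ) ((k : ℝ) - 1) ∪ Set.Icc (k : ℝ) (2 * (k : ℝ) - 1)) :
    |gPoly k x / gPoly k ((k : ℝ) - 1)| ≤ 1 := by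
  rw [abs_div, div_le_one (abs_pos.2 (gPoly_ne_zero hk))]
  rcases hx with hx | ⟨hx0, hx1⟩
  · exact abs_gPoly_le_of_mem_Icc hk hx
  · rw [← gPoly_reflect k x]
    exact abs_gPoly_le_of_mem_Icc hk ⟨by linarith, by linarith⟩
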